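/- Fix a real constant α. Let F(w, w̄, v) be a smooth real-valued function of a complex variable w and real variable v on an open set U ⊆ ℂ × ℝ. Then F satisfies the equation (F cos²α + F_{vv}) F_{ww̄} − (F_{w̄} cos α − i F_{vw̄})(F_w cos α + i F_{vw}) = 4 e^{−2v sin α} on U if and only if the function G := e^{v sin α} F satisfies equation (alterform) on U. -/

import Mathlib

noncomputable section

/-- Wirtinger derivative ∂_w of a complex-valued function of (w, v) ∈ ℂ × ℝ. -/
def dw (G : ℂ → ℝ → ℂ) : ℂ → ℝ → ℂ := fun w v =>
  ((fderiv ℝ (fun z => G z v) w 1) - Complex.I * (fderiv ℝ (fun z => G z v) w Complex.I)) / 2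

/-- Wirtinger derivative ∂_{w̄} of a complex-valued function of (w, v) ∈ ℂ × ℝ. -/
def dwb (G : ℂ → ℝ → ℂ) : ℂ → ℝ → ℂ := fun w v =>
  ((fderiv ℝ (fun z => G z v) w 1) + Complex.I * (fderiv ℝ (fun z => G z v) w Complex.I)) / 2

/-- Partial derivative ∂_v of a complex-valued function of (w, v) ∈ ℂ × ℝ. -/
def dv (G : ℂ → ℝ → ℂ) : ℂ → ℝ → ℂ := fun w v => deriv (fun t => G w t) v

/-- A real-valued function of (w, v), viewed as complex-valued. -/
def cx (G : ℂ → ℝ → ℝ) : ℂ → ℝ → ℂ := fun w v => (G w v : ℂ)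

/-- Equation (alterform) at the point (w, v):
(G + G_{vv} − 2 G_v sin α) G_{ww̄}
  − (e^{iα} G_{w̄} − i G_{vw̄})(e^{−iα} G_w + i G_{vw}) = 4. -/
def Alterform (α : ℝ) (G : ℂ → ℝ → ℝ) (w : ℂ) (v : ℝ) : Prop :=
  (cx G w v + dv (dv (cx G)) w v - 2 * dv (cx G) w v * (Real.sin α : ℂ))
      * dwb (dw (cx G)) w v
    - (Complex.exp (Complex.I * (α : ℂ)) * dwb (cx G) w v
        - Complex.I * dwb (dv (cx G)) w v)
      * (Complex.exp (-(Complex.I * (α : ℂ))) * dw (cx G) w v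
        + Complex.I * dw (dv (cx G)) w v)
    = 4

/-! Multiplication by `e^{v sin α}` commutes with `∂_w` and `∂_{w̄}` and conjugates `∂_v` into
`∂_v + sin α`. Substituting `G = e^{v sin α} F` into (alterform), using
`e^{±iα} = cos α ± i sin α` and `1 - sin²α = cos²α`, the left side of (alterform) for `G` is
`e^{2v sin α}` times the left side of the equation for `F`, and `e^{2v sin α} · 4e^{-2v sin α} = 4`.
-/

open Function Filter Topology Set

section Slices

variable {f g : ℂ → ℝ → ℂ} {U : Set (ℂ × ℝ)} {z : ℂ} {t : ℝ}

lemma DifferentiableAt.curry_left (h : DifferentiableAt ℝ (uncurry f) (z, t)) :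
    DifferentiableAt ℝ (f · t) z :=
  h.comp (f := fun x => (x, t)) z (differentiableAt_id.prodMk (differentiableAt_const t))

lemma DifferentiableAt.curry_right (h : DifferentiableAt ℝ (uncurry f) (z, t)) :
    DifferentiableAt ℝ (f z) t :=
  h.comp (f := fun x => (z, x)) t ((differentiableAt_const z).prodMk differentiableAt_id)

lemma dv_eq_fderiv_uncurry (h : DifferentiableAt ℝ (uncurry f) (z, t)) :
    dv f z t = fderiv ℝ (uncurry f) (z, t) (0, 1) :=
  (h.hasFDerivAt.comp_hasDerivAt t ((hasDerivAt_const t z).prodMk (hasDerivAt_id t))).deriv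

lemma ContDiffOn.uncurry_dv {m n : WithTop ℕ∞} (hf : ContDiffOn ℝ n (uncurry f) U)
    (hU : IsOpen U) (hmn : m + 1 ≤ n) : ContDiffOn ℝ m (uncurry (dv f)) U :=
  ((hf.fderiv_of_isOpen hU hmn).clm_apply contDiffOn_const).congr fun p hp =>
    dv_eq_fderiv_uncurry <| (hf.differentiableOn (zero_lt_one.trans_le (le_add_self.trans hmn)).ne'
      p hp).differentiableAt (hU.mem_nhds hp)

lemma eventuallyEq_curry_left (hU : IsOpen U) (hfg : EqOn (uncurry f) (uncurry g) U)
    (h : (z, t) ∈ U) : (f · t) =ᶠ[𝓝 z] (g · t) :=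
  eventually_of_mem ((continuous_id.prodMk continuous_const).continuousAt.preimage_mem_nhds
    (hU.mem_nhds h)) fun _ hx => hfg hx

lemma eventuallyEq_curry_right (hU : IsOpen U) (hfg : EqOn (uncurry f) (uncurry g) U)
    (h : (z, t) ∈ U) : f z =ᶠ[𝓝 t] g z :=
  eventually_of_mem ((continuous_const.prodMk continuous_id).continuousAt.preimage_mem_nhds
    (hU.mem_nhds h)) fun _ hx => hfg hx

end Slices

section Calculus

variable {f g : ℂ → ℝ → ℂ} {U : Set (ℂ × ℝ)} {z : ℂ} {t : ℝ}

lemma dv_congr_of_eqOn (hU : IsOpen U) (hfg : EqOn (uncurry f) (uncurry g) U)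
    (h : (z, t) ∈ U) : dv f z t = dv g z t :=
  (eventuallyEq_curry_right hU hfg h).deriv_eq

lemma dw_congr_of_eqOn (hU : IsOpen U) (hfg : EqOn (uncurry f) (uncurry g) U)
    (h : (z, t) ∈ U) : dw f z t = dw g z t := by
  simp only [dw, (eventuallyEq_curry_left hU hfg h).fderiv_eq]

lemma dwb_congr_of_eqOn (hU : IsOpen U) (hfg : EqOn (uncurry f) (uncurry g) U)
    (h : (z, t) ∈ U) : dwb f z t = dwb g z t := by
  simp only [dwb, (eventuallyEq_curry_left hU hfg h).fderiv_eq]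

lemma dw_mul_left (a : ℝ → ℂ) (f : ℂ → ℝ → ℂ) (z : ℂ) (t : ℝ) :
    dw (fun z t => a t * f z t) z t = a t * dw f z t := by
  simp only [dw]
  rw [show (fun x => a t * f x t) = a t • (fun x => f x t) from rfl, fderiv_const_smul_field]
  simp only [Pi.smul_apply, smul_apply, smul_eq_mul]
  ring

lemma dwb_mul_left (a : ℝ → ℂ) (f : ℂ → ℝ → ℂ) (z : ℂ) (t : ℝ) :
    dwb (fun z t => a t * f z t) z t = a t * dwb f z t := by
  simp only [dwb]
  rw [show (fun x => a t * f x t) = a t • (fun x => f x t) from rfl, fderiv_const_smul_field]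
  simp only [Pi.smul_apply, smul_apply, smul_eq_mul]
  ring

lemma dv_const_mul_add (c : ℂ) (hf : DifferentiableAt ℝ (f z) t)
    (hg : DifferentiableAt ℝ (g z) t) :
    dv (fun z t => c * f z t + g z t) z t = c * dv f z t + dv g z t :=
  ((hf.hasDerivAt.const_mul c).add hg.hasDerivAt).deriv

lemma dw_const_mul_add (c : ℂ) (hf : DifferentiableAt ℝ (f · t) z)
    (hg : DifferentiableAt ℝ (g · t) z) :
    dw (fun z t => c * f z t + g z t) z t = c * dw f z t + dw g z t := by
  simp only [dw]
  rw [fderiv_fun_add (hf.const_mul c) hg, fderiv_const_mul hf]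
  simp only [add_apply, smul_apply, smul_eq_mul]
  ring

lemma dwb_const_mul_add (c : ℂ) (hf : DifferentiableAt ℝ (f · t) z)
    (hg : DifferentiableAt ℝ (g · t) z) :
    dwb (fun z t => c * f z t + g z t) z t = c * dwb f z t + dwb g z t := by
  simp only [dwb]
  rw [fderiv_fun_add (hf.const_mul c) hg, fderiv_const_mul hf]
  simp only [add_apply, smul_apply, smul_eq_mul]
  ring

end Calculus

def expWeight (s : ℝ) (f : ℂ → ℝ → ℂ) : ℂ → ℝ → ℂ :=
  fun z t => (Real.exp (t * s) : ℂ) * f z t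

section ExpWeight

variable {f : ℂ → ℝ → ℂ} {z : ℂ} {t : ℝ} (s : ℝ)

lemma dw_expWeight : dw (expWeight s f) = expWeight s (dw f) :=
  funext₂ fun z t => dw_mul_left _ f z t

lemma dwb_expWeight : dwb (expWeight s f) = expWeight s (dwb f) :=
  funext₂ fun z t => dwb_mul_left _ f z t

lemma dv_expWeight (hf : DifferentiableAt ℝ (f z) t) :
    dv (expWeight s f) z t = expWeight s (fun z t => s * f z t + dv f z t) z t := by
  have hexp : HasDerivAt (fun t => (Real.exp (t * s) : ℂ)) (Real.exp (t * s) * s) t := by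
    simpa using ((hasDerivAt_id t).mul_const s).exp.ofReal_comp
  change deriv (fun t => (Real.exp (t * s) : ℂ) * f z t) t = _
  rw [(hexp.fun_mul hf.hasDerivAt).deriv]
  simp only [expWeight, dv]
  ring

end ExpWeight

def alterformLHS (α : ℝ) (g : ℂ → ℝ → ℂ) (w : ℂ) (v : ℝ) : ℂ :=
  (g w v + dv (dv g) w v - 2 * dv g w v * (Real.sin α : ℂ)) * dwb (dw g) w v
    - (Complex.exp (Complex.I * (α : ℂ)) * dwb g w v - Complex.I * dwb (dv g) w v)
      * (Complex.exp (-(Complex.I * (α : ℂ))) * dw g w v + Complex.I * dw (dv g) w v)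

def euclidLHS (α : ℝ) (f : ℂ → ℝ → ℂ) (w : ℂ) (v : ℝ) : ℂ :=
  (f w v * (Real.cos α : ℂ) ^ 2 + dv (dv f) w v) * dwb (dw f) w v
    - (dwb f w v * (Real.cos α : ℂ) - Complex.I * dwb (dv f) w v)
      * (dw f w v * (Real.cos α : ℂ) + Complex.I * dw (dv f) w v)

lemma alterformLHS_expWeight {α : ℝ} {f : ℂ → ℝ → ℂ} {U : Set (ℂ × ℝ)} (hU : IsOpen U)
    (hf : ContDiffOn ℝ 2 (uncurry f) U) {w : ℂ} {v : ℝ} (hwv : (w, v) ∈ U) :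
    alterformLHS α (expWeight (Real.sin α) f) w v
      = (Real.exp (v * Real.sin α) : ℂ) ^ 2 * euclidLHS α f w v := by
  set s := Real.sin α
  set c := Real.cos α
  have hdf : ∀ p ∈ U, DifferentiableAt ℝ (uncurry f) p := fun p hp =>
    (hf.differentiableOn two_ne_zero p hp).differentiableAt (hU.mem_nhds hp)
  have hddf : ∀ p ∈ U, DifferentiableAt ℝ (uncurry (dv f)) p := fun p hp =>
    ((hf.uncurry_dv hU le_rfl).differentiableOn one_ne_zero p hp).differentiableAt
      (hU.mem_nhds hp)
  -- `∂_v G = e^{vs} (s f + f_v)` holds on all of `U`, so it may be differentiated once more.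
  have hdvG : EqOn (uncurry (dv (expWeight s f)))
      (uncurry (expWeight s (fun z t => s * f z t + dv f z t))) U := fun p hp =>
    dv_expWeight s (hdf p hp).curry_right
  have hdvdvG : dv (dv (expWeight s f)) w v = Real.exp (v * s)
      * (s ^ 2 * f w v + 2 * s * dv f w v + dv (dv f) w v) := by
    rw [dv_congr_of_eqOn hU hdvG hwv, dv_expWeight, expWeight,
      dv_const_mul_add _ (hdf _ hwv).curry_right (hddf _ hwv).curry_right]
    · ring
    · exact ((hdf _ hwv).curry_right.const_mul _).add (hddf _ hwv).curry_right
  have hdwdvG : dw (dv (expWeight s f)) w v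
      = Real.exp (v * s) * (s * dw f w v + dw (dv f) w v) := by
    rw [dw_congr_of_eqOn hU hdvG hwv, dw_expWeight, expWeight,
      dw_const_mul_add _ (hdf _ hwv).curry_left (hddf _ hwv).curry_left]
  have hdwbdvG : dwb (dv (expWeight s f)) w v
      = Real.exp (v * s) * (s * dwb f w v + dwb (dv f) w v) := by
    rw [dwb_congr_of_eqOn hU hdvG hwv, dwb_expWeight, expWeight,
      dwb_const_mul_add _ (hdf _ hwv).curry_left (hddf _ hwv).curry_left]
  have hexp : Complex.exp (Complex.I * α) = c + s * Complex.I := by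
    rw [mul_comm, Complex.exp_mul_I, ← Complex.ofReal_cos, ← Complex.ofReal_sin]
  have hexp_neg : Complex.exp (-(Complex.I * α)) = c - s * Complex.I := by
    rw [← mul_neg, mul_comm, Complex.exp_mul_I, Complex.cos_neg, Complex.sin_neg,
      ← Complex.ofReal_cos, ← Complex.ofReal_sin, neg_mul, ← sub_eq_add_neg]
  have hpyth : (c : ℂ) ^ 2 + (s : ℂ) ^ 2 = 1 := by exact_mod_cast Real.cos_sq_add_sin_sq α
  simp only [alterformLHS, euclidLHS, hdvdvG, hdwdvG, hdwbdvG,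
    dv_expWeight s (hdf _ hwv).curry_right, dw_expWeight, dwb_expWeight, expWeight, hexp, hexp_neg]
  linear_combination (-(Real.exp (v * s) : ℂ) ^ 2 * f w v * dwb (dw f) w v) * hpyth

/-- F satisfies
(F cos²α + F_{vv}) F_{ww̄} − (F_{w̄} cos α − i F_{vw̄})(F_w cos α + i F_{vw}) = 4 e^{−2v sin α}
on U iff G := e^{v sin α} F satisfies equation (alterform) on U. -/
theorem euclid_iff_alterform (α : ℝ) (U : Set (ℂ × ℝ)) (hU : IsOpen U)
    (F : ℂ → ℝ → ℝ)
    (hF : ContDiffOn ℝ (⊤ : ℕ∞) (fun p : ℂ × ℝ => F p.1 p.2) U) :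
    (∀ w : ℂ, ∀ v : ℝ, (w, v) ∈ U →
        (cx F w v * (Real.cos α : ℂ) ^ 2 + dv (dv (cx F)) w v) * dwb (dw (cx F)) w v
          - (dwb (cx F) w v * (Real.cos α : ℂ) - Complex.I * dwb (dv (cx F)) w v)
            * (dw (cx F) w v * (Real.cos α : ℂ) + Complex.I * dw (dv (cx F)) w v)
          = ((4 * Real.exp (-2 * v * Real.sin α) : ℝ) : ℂ))
    ↔ (∀ w : ℂ, ∀ v : ℝ, (w, v) ∈ U →
        Alterform α (fun z t => Real.exp (t * Real.sin α) * F z t) w v) := by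
  have hf : ContDiffOn ℝ 2 (uncurry (cx F)) U :=
    (Complex.ofRealCLM.contDiff.comp_contDiffOn hF).of_le (WithTop.coe_le_coe.mpr le_top)
  have hG :
      cx (fun z t => Real.exp (t * Real.sin α) * F z t) = expWeight (Real.sin α) (cx F) := by
    funext z t
    simp only [cx, expWeight, Complex.ofReal_mul]
  have hweight : ∀ v : ℝ,
      (Real.exp (v * Real.sin α) : ℂ) ^ 2 * ((4 * Real.exp (-2 * v * Real.sin α) : ℝ) : ℂ) = 4 := by
    intro v
    rw [← Complex.ofReal_pow, ← Complex.ofReal_mul, ← Real.exp_nat_mul, mul_left_comm,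
      ← Real.exp_add,
      show ((2 : ℕ) : ℝ) * (v * Real.sin α) + -2 * v * Real.sin α = 0 by push_cast; ring,
      Real.exp_zero]
    norm_num
  refine forall₂_congr fun w v => forall_congr' fun hwv => ?_
  change euclidLHS α (cx F) w v = _ ↔ alterformLHS α _ w v = 4
  rw [hG, alterformLHS_expWeight hU hf hwv, ← hweight v,
    mul_right_inj' (pow_ne_zero 2 (Complex.ofReal_ne_zero.mpr (Real.exp_ne_zero _)))]

end
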